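/- arXiv:2002.03065 — 8 statements merged into one kernel-verified Lean document; each statement's English description precedes it below -/
import Mathlib

section
/- Let r_0, r_1, ..., r_n be a sequence of non-negative real numbers and C ≥ 0 a constant such that (1/2) r_{i-1} + (1/2) r_{i+1} ≤ r_i + C for all 0 < i < n. Then ((n-1)/n) r_0 + (1/n) r_n ≤ r_1 + (n-1) C. -/
theorem stmt_1 (n : ℕ) (hn : 1 ≤ n) (r : ℕ → ℝ) (C : ℝ) (hC : 0 ≤ C)
    (hnn : ∀ i, i ≤ n → 0 ≤ r i)
    (hconc : ∀ i, 0 < i → i < n → (1/2) * r (i-1) + (1/2) * r (i+1) ≤ r i + C) :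
    ((n:ℝ) - 1) / n * r 0 + (1 / (n:ℝ)) * r n ≤ r 1 + ((n:ℝ) - 1) * C := by
  have hd : ∀ i, i < n → r (i+1) - r i ≤ r 1 - r 0 + 2*(i:ℝ)*C := by
    intro i
    induction i with
    | zero => intro _; simp
    | succ k ih =>
      intro hk
      have h1 : k < n := by omega
      have h2 := hconc (k+1) (by omega) hk
      have h3 := ih h1
      simp only [Nat.add_sub_cancel] at h2
      push_cast
      linarith
  have key : ∀ i, i ≤ n → r i ≤ r 0 + (i:ℝ)*(r 1 - r 0) + C*(i:ℝ)*((i:ℝ)-1) := by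
    intro i
    induction i with
    | zero => intro _; simp
    | succ k ih =>
      intro hk
      have h1 := hd k (by omega)
      have h2 := ih (by omega)
      push_cast
      nlinarith [hC]
  have hfin := key n le_rfl
  have hn0 : (0:ℝ) < n := by positivity
  have heq : ((n:ℝ) - 1) / n * r 0 + (1 / (n:ℝ)) * r n = (((n:ℝ)-1)*r 0 + r n)/n := by
    ring
  rw [heq, div_le_iff₀ hn0]
  nlinarith [hfin]
end

section
/- Let r_0, r_1, ..., r_n be a sequence of non-negative real numbers and C ≥ 0 a constant such that (1/2) r_{i-1} + (1/2) r_{i+1} ≤ r_i + C for all 0 < i < n. Then for any index p and any l, k with 0 ≤ l ≤ p and 0 ≤ k ≤ n - p and k + l > 0, one has (k/(k+l)) r_{p-l} + (l/(k+l)) r_{p+k} ≤ r_p + k·l·C. -/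
/-!
Subtracting `C i²` turns the hypothesis into discrete concavity: `g i = r i - C i²` satisfies
`g (i-1) + g (i+1) ≤ 2 g i`, so its increments `g (i+1) - g i` decrease. With `c` the increment
just below `p`, telescoping gives `g p - g (p-l) ≥ l c` and `g (p+k) - g p ≤ k c`, hence the chord
inequality `k g (p-l) + l g (p+k) ≤ (k+l) g p`. Adding back `C i²` costs exactly
`k (p-l)² + l (p+k)² - (k+l) p² = k l (k+l)` times `C`.
-/

namespace DiscreteConcave

variable {g : ℕ → ℝ} {n : ℕ}

theorem antitoneOn_sub_succ (hg : ∀ i, i + 2 ≤ n → g i + g (i + 2) ≤ 2 * g (i + 1)) :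
    AntitoneOn (fun i => g (i + 1) - g i) (Set.Iio n) := by
  intro i _ j hj hij
  induction j, hij using Nat.le_induction with
  | base => exact le_rfl
  | succ m _ ih =>
    have := hg m hj
    exact le_trans (by dsimp only; linarith) (ih (Nat.lt_of_succ_lt hj))

theorem mul_le_sub_of_le_sub_succ {c : ℝ} (a m : ℕ)
    (h : ∀ j, a ≤ j → j < a + m → c ≤ g (j + 1) - g j) : m * c ≤ g (a + m) - g a := by
  induction m with
  | zero => simp
  | succ m ih =>
    have := h (a + m) (by omega) (by omega)
    have := ih fun j hj hjm => h j hj (by omega)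
    push_cast
    rw [← add_assoc]
    linarith

theorem sub_le_mul_of_sub_succ_le {c : ℝ} (a m : ℕ)
    (h : ∀ j, a ≤ j → j < a + m → g (j + 1) - g j ≤ c) : g (a + m) - g a ≤ m * c := by
  have := mul_le_sub_of_le_sub_succ (g := fun i => -g i) (c := -c) a m
    fun j hj hjm => by linarith [h j hj hjm]
  linarith

theorem chord_le (hg : ∀ i, i + 2 ≤ n → g i + g (i + 2) ≤ 2 * g (i + 1))
    {p l k : ℕ} (hl : l ≤ p) (hpk : p + k ≤ n) :
    k * g (p - l) + l * g (p + k) ≤ (k + l) * g p := by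
  have hanti := antitoneOn_sub_succ hg
  set c := g (p - 1 + 1) - g (p - 1)
  have hlow : l * c ≤ g p - g (p - l) := by
    have := mul_le_sub_of_le_sub_succ (g := g) (c := c) (p - l) l fun j _ hj =>
      hanti (by simp only [Set.mem_Iio]; omega) (by simp only [Set.mem_Iio]; omega) (by omega)
    rwa [Nat.sub_add_cancel hl] at this
  have hhigh : g (p + k) - g p ≤ k * c :=
    sub_le_mul_of_sub_succ_le p k fun j hj hjk =>
      hanti (by simp only [Set.mem_Iio]; omega) (by simp only [Set.mem_Iio]; omega) (by omega)
  linear_combination mul_le_mul_of_nonneg_left hlow k.cast_nonneg +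
    mul_le_mul_of_nonneg_left hhigh l.cast_nonneg

end DiscreteConcave

theorem stmt_3_general (n : ℕ) (r : ℕ → ℝ) (C : ℝ)
    (hconc : ∀ i, 0 < i → i < n → (1/2) * r (i-1) + (1/2) * r (i+1) ≤ r i + C) :
    ∀ p l k : ℕ, l ≤ p → p + k ≤ n → 0 < k + l →
      ((k:ℝ) / (k + l)) * r (p - l) + ((l:ℝ) / (k + l)) * r (p + k) ≤
        r p + (k:ℝ) * (l:ℝ) * C := by
  intro p l k hl hpk hkl
  have hg : ∀ i, i + 2 ≤ n → (r i - C * (i : ℝ) ^ 2) + (r (i + 2) - C * ((i + 2 : ℕ) : ℝ) ^ 2)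
      ≤ 2 * (r (i + 1) - C * ((i + 1 : ℕ) : ℝ) ^ 2) := fun i hi => by
    have := hconc (i + 1) i.succ_pos hi
    simp only [Nat.add_sub_cancel, add_assoc, Nat.reduceAdd] at this
    push_cast
    linarith
  have key := DiscreteConcave.chord_le hg hl hpk
  rw [Nat.cast_sub hl, Nat.cast_add] at key
  have hs : (0 : ℝ) < k + l := by exact_mod_cast hkl
  rw [div_mul_eq_mul_div, div_mul_eq_mul_div, ← add_div, div_le_iff₀ hs]
  linear_combination key

theorem stmt_3 (n : ℕ) (r : ℕ → ℝ) (C : ℝ) (hC : 0 ≤ C)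
    (hnn : ∀ i, i ≤ n → 0 ≤ r i)
    (hconc : ∀ i, 0 < i → i < n → (1/2) * r (i-1) + (1/2) * r (i+1) ≤ r i + C) :
    ∀ p l k : ℕ, l ≤ p → p + k ≤ n → 0 < k + l →
      ((k:ℝ) / (k + l)) * r (p - l) + ((l:ℝ) / (k + l)) * r (p + k) ≤
        r p + (k:ℝ) * (l:ℝ) * C :=
  stmt_3_general n r C hconc
end

section
/- For d ≥ 3, the function f on Δ = {p ∈ Z_{≥0}^d : Σp_i = d} defined by f(1,1,...,1) = 3 and f(p) = 1 for all other p ∈ Δ satisfies all linearized Aleksandrov-Fenchel relations (2 f(p) ≥ f(p+e_i-e_j) + f(p-e_i+e_j) whenever all three points lie in Δ, and f(d·e_i) ≥ 1 for all i), but violates the square inequality f(p)·f(p+u_1+u_2) ≤ 2 f(p+u_1)·f(p+u_2); namely, f((3,0,0,1,...,1))·f((1,1,1,1,...,1)) > 2·f((2,1,0,1,...,1))·f((2,0,1,1,...,1)). -/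
/-- The function on `Δ_{d,d}` equal to `3` at the all-ones vector and `1` elsewhere. -/
def f8 (d : ℕ) (p : Fin d → ℕ) : ℝ :=
  if ∀ i, p i = 1 then 3 else 1

theorem stmt_8 (d : ℕ) (hd : 3 ≤ d) :
    -- (a) all linearized Aleksandrov-Fenchel relations hold
    (∀ (p : Fin d → ℕ) (i j : Fin d), i ≠ j → ∑ k, p k = d → 1 ≤ p i → 1 ≤ p j →
      f8 d (Function.update (Function.update p i (p i + 1)) j (p j - 1)) +
        f8 d (Function.update (Function.update p j (p j + 1)) i (p i - 1)) ≤
        2 * f8 d p) ∧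
    -- (a') nonnegativity-type conditions at the vertices d·e_i
    (∀ i : Fin d, 1 ≤ f8 d (fun k => if k = i then d else 0)) ∧
    -- (b) violation of the square inequality
    f8 d (fun k => if (k : ℕ) = 0 then 3 else if (k : ℕ) < 3 then 0 else 1) *
        f8 d (fun _ => 1) >
      2 * f8 d (fun k => if (k : ℕ) = 0 then 2 else if (k : ℕ) = 1 then 1
            else if (k : ℕ) = 2 then 0 else 1) *
        f8 d (fun k => if (k : ℕ) = 0 then 2 else if (k : ℕ) = 1 then 0
            else if (k : ℕ) = 2 then 1 else 1) := by
  refine ⟨?_, ?_, ?_⟩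
  · intro p i j hij _ hpi hpj
    have h1 : f8 d (Function.update (Function.update p i (p i + 1)) j (p j - 1)) = 1 := by
      apply if_neg
      intro h
      have := h i
      rw [Function.update_of_ne hij, Function.update_self] at this
      omega
    have h2 : f8 d (Function.update (Function.update p j (p j + 1)) i (p i - 1)) = 1 := by
      apply if_neg
      intro h
      have := h j
      rw [Function.update_of_ne hij.symm, Function.update_self] at this
      omega
    have hp : (1 : ℝ) ≤ f8 d p := by unfold f8; split <;> norm_num
    rw [h1, h2]; linarith
  · intro i; unfold f8; split <;> norm_num
  · have i0 : Fin d := ⟨0, by omega⟩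
    have hA : f8 d (fun k => if (k : ℕ) = 0 then 3 else if (k : ℕ) < 3 then 0 else 1) = 1 := by
      apply if_neg
      intro h
      have := h ⟨0, by omega⟩
      simp at this
    have hB : f8 d (fun _ => 1) = 3 := if_pos (fun _ => rfl)
    have hC : f8 d (fun k => if (k : ℕ) = 0 then 2 else if (k : ℕ) = 1 then 1
        else if (k : ℕ) = 2 then 0 else 1) = 1 := by
      apply if_neg
      intro h
      have := h ⟨0, by omega⟩
      simp at this
    have hD : f8 d (fun k => if (k : ℕ) = 0 then 2 else if (k : ℕ) = 1 then 0
        else if (k : ℕ) = 2 then 1 else 1) = 1 := by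
      apply if_neg
      intro h
      have := h ⟨0, by omega⟩
      simp at this
    rw [hA, hB, hC, hD]; norm_num
end

section
/- Let V : Δ → R_{>0} be a function on Δ = {p ∈ Z_{≥0}^d : Σ p_i = d} satisfying the square inequalities V(p)·V(p+u_1+u_2) ≤ 2·V(p+u_1)·V(p+u_2) for all p ∈ Δ with p_j ≥ 2 and directions u_1 = e_{i1} - e_j, u_2 = e_{i2} - e_j with i_1, i_2, j pairwise different. Then for every subset I ⊆ [d], every i, j ∈ [d]\I with i ≠ j, and every p ∈ Δ with p_j > |I|, the generalized square inequality holds: V(p)·V(p + u_{I,j} + u_{i,j}) ≤ 2^{|I|}·V(p + u_{I,j})·V(p + u_{i,j}), where u_{I,j} = Σ_{k∈I}(e_k - e_j). -/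
/-- Membership in `Δ_{d,d} = {p ∈ Z^d : p ≥ 0, Σ p_i = d}`. -/
def inDelta (d : ℕ) (p : Fin d → ℤ) : Prop :=
  (∀ i, 0 ≤ p i) ∧ ∑ i, p i = d

/-- The standard basis vector `e_i`. -/
def ev (d : ℕ) (i : Fin d) : Fin d → ℤ := fun k => if k = i then 1 else 0

/-- The direction `u_{i,j} = e_i - e_j`. -/
def uu (d : ℕ) (i j : Fin d) : Fin d → ℤ := ev d i - ev d j

/-- The direction `u_{I,j} = Σ_{k∈I} (e_k - e_j)`. -/
def uI (d : ℕ) (I : Finset (Fin d)) (j : Fin d) : Fin d → ℤ :=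
  ∑ k ∈ I, (ev d k - ev d j)

lemma uI_apply (d : ℕ) (I : Finset (Fin d)) (j m : Fin d) :
    uI d I j m = (if m ∈ I then 1 else 0) - I.card * (if m = j then 1 else 0) := by
  simp [uI, ev, Finset.sum_apply, Finset.sum_sub_distrib, eq_comm, mul_comm]

lemma inDelta_shift {d : ℕ} {I : Finset (Fin d)} {j : Fin d} {p : Fin d → ℤ}
    (hj : j ∉ I) (hp : inDelta d p) (hpj : (I.card : ℤ) ≤ p j) :
    inDelta d (p + uI d I j) := by
  obtain ⟨h1, h2⟩ := hp
  constructor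
  · intro m
    rw [Pi.add_apply, uI_apply]
    by_cases hm : m = j
    · subst hm
      simp [hj]
      linarith
    · have := h1 m
      simp [hm]
      split <;> linarith
  · have : ∑ m, (p + uI d I j) m = ∑ m, p m + ∑ m, uI d I j m := by
      simp [Finset.sum_add_distrib]
    rw [this, h2]
    have : ∑ m, uI d I j m = 0 := by
      simp only [uI, Finset.sum_apply, Pi.sub_apply]
      rw [Finset.sum_comm]
      apply Finset.sum_eq_zero
      intro k _
      simp [ev, eq_comm]
    rw [this, add_zero]

lemma shift_apply_j {d : ℕ} (I : Finset (Fin d)) (j : Fin d) (p : Fin d → ℤ)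
    (hj : j ∉ I) : (p + uI d I j) j = p j - I.card := by
  rw [Pi.add_apply, uI_apply]
  simp [hj]; ring

theorem stmt_9 (d : ℕ) (V : (Fin d → ℤ) → ℝ)
    (hpos : ∀ p, inDelta d p → 0 < V p)
    (hsq : ∀ (p : Fin d → ℤ) (i₁ i₂ j : Fin d), i₁ ≠ i₂ → i₁ ≠ j → i₂ ≠ j →
      inDelta d p → 2 ≤ p j →
      V p * V (p + uu d i₁ j + uu d i₂ j) ≤ 2 * V (p + uu d i₁ j) * V (p + uu d i₂ j))
    (I : Finset (Fin d)) (i j : Fin d) (hiI : i ∉ I) (hjI : j ∉ I) (hij : i ≠ j)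
    (p : Fin d → ℤ) (hp : inDelta d p) (hpj : (I.card : ℤ) < p j) :
    V p * V (p + uI d I j + uu d i j) ≤
      2 ^ I.card * V (p + uI d I j) * V (p + uu d i j) := by
  induction I using Finset.induction_on generalizing p with
  | empty =>
    have : uI d ∅ j = 0 := by simp [uI]
    simp [this]
  | @insert k s hk ih =>
    have his : i ∉ s := fun h => hiI (Finset.mem_insert_of_mem h)
    have hjs : j ∉ s := fun h => hjI (Finset.mem_insert_of_mem h)
    have hik : i ≠ k := fun h => hiI (h ▸ Finset.mem_insert_self k s)
    have hjk : k ≠ j := fun h => hjI (h ▸ Finset.mem_insert_self k s)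
    have hcard : (insert k s).card = s.card + 1 := Finset.card_insert_of_notMem hk
    have hpj' : (s.card : ℤ) + 2 ≤ p j := by
      rw [hcard] at hpj; push_cast at hpj; linarith
    set q := p + uI d s j with hqdef
    -- decompositions
    have uI_insert : ∀ (m : Fin d) (t : Finset (Fin d)), m ∉ t →
        uI d (insert m t) j = uu d m j + uI d t j := by
      intro m t hm
      rw [uI, Finset.sum_insert hm, uu, uI]
    have e1 : p + uI d (insert k s) j = q + uu d k j := by
      rw [hqdef, uI_insert k s hk]; abel
    have e2 : q + uu d i j = p + uI d (insert i s) j := by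
      rw [hqdef, uI_insert i s his]; abel
    -- Delta memberships
    have hq : inDelta d q := inDelta_shift hjs hp (by linarith)
    have hqj : (2 : ℤ) ≤ q j := by
      rw [hqdef, shift_apply_j s j p hjs]; linarith
    have hqk : inDelta d (q + uu d k j) := by
      rw [← e1]
      exact inDelta_shift hjI hp (by rw [hcard]; push_cast; linarith)
    have hqi : inDelta d (q + uu d i j) := by
      rw [e2]
      refine inDelta_shift (fun h => ?_) hp ?_
      · rcases Finset.mem_insert.mp h with h | h
        · exact hij h.symm
        · exact hjs h
      · rw [Finset.card_insert_of_notMem his]; push_cast; linarith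
    -- the two inequalities
    have A := hsq q k i j hik.symm hjk hij hq hqj
    have B := ih his hjs p hp (by linarith)
    rw [← hqdef] at B
    have hVq : 0 < V q := hpos q hq
    have hVqi : 0 < V (q + uu d i j) := hpos _ hqi
    have hVqk : 0 < V (q + uu d k j) := hpos _ hqk
    have hVp : 0 < V p := hpos p hp
    rw [e1, hcard]
    have hmul := mul_le_mul A B (mul_nonneg hVp.le hVqi.le)
      (by positivity)
    rw [pow_succ]
    nlinarith [hmul, mul_pos hVq hVqi, hVp, hVqi, hVqk]
end

section
/- Let mv : Δ → R_{≥0} on Δ = {p ∈ Z_{≥0}^3 : p_1+p_2+p_3 = 3} satisfy the linearized Aleksandrov-Fenchel inequalities 2·mv(p) ≥ mv(p+e_i-e_j) + mv(p-e_i+e_j) whenever all three points lie in Δ, together with mv(1,1,1) = 1. Then mv(3,0,0) ≤ 3, mv(2,1,0) ≤ 2, and mv(2,0,1) ≤ 2. -/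
theorem stmt_10 (mv : (Fin 3 → ℕ) → ℝ)
    (hnn : ∀ p : Fin 3 → ℕ, ∑ k, p k = 3 → 0 ≤ mv p)
    (hAF : ∀ (p : Fin 3 → ℕ) (i j : Fin 3), i ≠ j → ∑ k, p k = 3 → 1 ≤ p i → 1 ≤ p j →
      mv (Function.update (Function.update p i (p i + 1)) j (p j - 1)) +
        mv (Function.update (Function.update p j (p j + 1)) i (p i - 1)) ≤
        2 * mv p)
    (h1 : mv ![1, 1, 1] = 1) :
    mv ![3, 0, 0] ≤ 3 ∧ mv ![2, 1, 0] ≤ 2 ∧ mv ![2, 0, 1] ≤ 2 := by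
  have hA : mv ![2, 0, 1] + mv ![0, 2, 1] ≤ 2 * mv ![1, 1, 1] := by
    have h := hAF ![1, 1, 1] 0 1 (by decide) (by decide) (by decide) (by decide)
    convert h using 3 <;> decide
  have hB : mv ![2, 1, 0] + mv ![0, 1, 2] ≤ 2 * mv ![1, 1, 1] := by
    have h := hAF ![1, 1, 1] 0 2 (by decide) (by decide) (by decide) (by decide)
    convert h using 3 <;> decide
  have hC : mv ![3, 0, 0] + mv ![1, 2, 0] ≤ 2 * mv ![2, 1, 0] := by
    have h := hAF ![2, 1, 0] 0 1 (by decide) (by decide) (by decide) (by decide)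
    convert h using 3 <;> decide
  have hD : mv ![0, 3, 0] + mv ![2, 1, 0] ≤ 2 * mv ![1, 2, 0] := by
    have h := hAF ![1, 2, 0] 1 0 (by decide) (by decide) (by decide) (by decide)
    convert h using 3 <;> decide
  have n1 : 0 ≤ mv ![0, 2, 1] := hnn _ (by decide)
  have n2 : 0 ≤ mv ![0, 1, 2] := hnn _ (by decide)
  have n3 : 0 ≤ mv ![0, 3, 0] := hnn _ (by decide)
  have n4 : 0 ≤ mv ![1, 2, 0] := hnn _ (by decide)
  refine ⟨by linarith, by linarith, by linarith⟩
end

section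
/- Let d ≥ 2 and let mv : Δ_{d,d} → R_{≥0} be a function satisfying all linearized Aleksandrov-Fenchel relations (discrete concavity along each direction e_i - e_j). Then d · mv(1,1,...,1) ≥ mv(d,0,...,0) + mv(0,d,0,...,0) + ... + mv(0,...,0,d); in particular mv(d·e_i) ≤ d·mv(1,...,1) for each i. -/
lemma concave_seq (m : ℕ) (a : ℕ → ℝ)
    (hc : ∀ t, 0 < t → t < m → 2 * a t ≥ a (t+1) + a (t-1)) :
    ∀ k, k ≤ m → (m : ℝ) * a k ≥ ((m : ℝ) - k) * a 0 + (k : ℝ) * a m := by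
  set c : ℕ → ℝ := fun t => a (t+1) - a t with hc_def
  have hstep : ∀ t, t + 1 < m → c (t+1) ≤ c t := by
    intro t ht
    have := hc (t+1) (Nat.succ_pos t) ht
    simp only [hc_def]
    simp only [Nat.add_sub_cancel] at this
    linarith
  have hanti : ∀ s t, s ≤ t → t < m → c t ≤ c s := by
    intro s t hst htm
    induction t with
    | zero => simp_all
    | succ n ih =>
      rcases Nat.eq_or_lt_of_le hst with h | h
      · rw [h]
      · exact le_trans (hstep n htm) (ih (Nat.lt_succ_iff.mp h) (Nat.lt_of_succ_lt htm))
  intro k hk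
  rcases Nat.eq_zero_or_pos k with rfl | hk0
  · simp
  rcases Nat.eq_or_lt_of_le hk with rfl | hkm
  · ring_nf; linarith [le_refl (a k)]
  -- 0 < k < m
  have hsum1 : a k - a 0 = ∑ t ∈ Finset.range k, c t := by
    rw [Finset.sum_range_sub (fun t => a t)]
  have hsum2 : a m - a k = ∑ t ∈ Finset.Ico k m, c t := by
    rw [Finset.sum_Ico_eq_sub _ hk, Finset.sum_range_sub (fun t => a t),
      Finset.sum_range_sub (fun t => a t)]
    ring
  have hb1 : (k : ℝ) * c (k-1) ≤ a k - a 0 := by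
    rw [hsum1]
    have : ∀ t ∈ Finset.range k, c (k-1) ≤ c t := by
      intro t ht
      exact hanti t (k-1) (Nat.le_sub_one_of_lt (Finset.mem_range.mp ht))
        (lt_of_le_of_lt (Nat.sub_le k 1) hkm)
    calc (k:ℝ) * c (k-1) = (Finset.range k).card • c (k-1) := by
          simp [nsmul_eq_mul]
      _ ≤ ∑ t ∈ Finset.range k, c t := Finset.card_nsmul_le_sum _ _ _ this
  have hb2 : a m - a k ≤ ((m : ℝ) - k) * c (k-1) := by
    rw [hsum2]
    have : ∀ t ∈ Finset.Ico k m, c t ≤ c (k-1) := by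
      intro t ht
      rw [Finset.mem_Ico] at ht
      exact hanti (k-1) t (le_trans (Nat.sub_le k 1) ht.1) ht.2
    calc ∑ t ∈ Finset.Ico k m, c t ≤ (Finset.Ico k m).card • c (k-1) :=
          Finset.sum_le_card_nsmul _ _ _ this
      _ = ((m : ℝ) - k) * c (k-1) := by
          rw [Nat.card_Ico, nsmul_eq_mul, Nat.cast_sub hk]
  have hkR : (0:ℝ) ≤ k := by positivity
  have hmkR : (0:ℝ) ≤ (m:ℝ) - k := by
    have : (k:ℝ) ≤ m := by exact_mod_cast hk
    linarith
  nlinarith [mul_le_mul_of_nonneg_left hb1 hmkR, mul_le_mul_of_nonneg_left hb2 hkR]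

lemma uu_apply (d : ℕ) (i j l : Fin d) (hij : i ≠ j) :
    uu d i j l = if l = i then 1 else if l = j then -1 else 0 := by
  simp only [uu, ev, Pi.sub_apply]
  split_ifs with h1 h2 <;> simp_all

lemma sum_uu (d : ℕ) (i j : Fin d) (hij : i ≠ j) : ∑ l, uu d i j l = 0 := by
  simp only [uu, ev, Pi.sub_apply, Finset.sum_sub_distrib]
  simp

lemma claimA (d : ℕ) (hd : 1 ≤ d) (mv : (Fin d → ℤ) → ℝ)
    (hAF : ∀ (p : Fin d → ℤ) (i j : Fin d), i ≠ j →
      inDelta d p → inDelta d (p + uu d i j) → inDelta d (p - uu d i j) →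
      2 * mv p ≥ mv (p + uu d i j) + mv (p - uu d i j)) :
    ∀ (n : ℕ) (p : Fin d → ℤ),
      (Finset.univ.filter (fun i => p i ≠ 0)).card ≤ n → inDelta d p →
      (d : ℝ) * mv p ≥ ∑ i, (p i : ℝ) * mv ((d : ℤ) • ev d i) := by
  intro n
  induction n with
  | zero =>
    intro p hcard hp
    exfalso
    have hall : ∀ i, p i = 0 := by
      intro i
      by_contra h
      have : i ∈ Finset.univ.filter (fun i => p i ≠ 0) := by simp [h]
      have := Finset.card_pos.mpr ⟨i, this⟩
      omega
    have := hp.2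
    simp [hall] at this
    omega
  | succ n ih =>
    intro p hcard hp
    by_cases hex : ∃ i j : Fin d, i ≠ j ∧ p i ≠ 0 ∧ p j ≠ 0
    · obtain ⟨i, j, hij, hpi, hpj⟩ := hex
      have hpi1 : 1 ≤ p i := lt_of_le_of_ne (hp.1 i) (Ne.symm hpi)
      have hpj1 : 1 ≤ p j := lt_of_le_of_ne (hp.1 j) (Ne.symm hpj)
      set m : ℕ := (p i + p j).toNat with hm
      set k : ℕ := (p i).toNat with hk
      have hmZ : (m : ℤ) = p i + p j := Int.toNat_of_nonneg (by omega)
      have hkZ : (k : ℤ) = p i := Int.toNat_of_nonneg (by omega)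
      have hkm : k ≤ m := by omega
      set q : ℕ → (Fin d → ℤ) := fun t => p + ((t : ℤ) - p i) • uu d i j with hq
      have hql : ∀ t l, q t l = p l + ((t:ℤ) - p i) * uu d i j l := by
        intro t l; simp [hq]
      have hqΔ : ∀ t, t ≤ m → inDelta d (q t) := by
        intro t ht
        constructor
        · intro l
          rw [hql, uu_apply d i j l hij]
          have htm : (t : ℤ) ≤ (m : ℤ) := by exact_mod_cast ht
          split_ifs with h1 h2
          · subst h1; omega
          · subst h2; omega
          · have := hp.1 l; omega
        · have : ∑ l, q t l = ∑ l, p l + ((t:ℤ) - p i) * ∑ l, uu d i j l := by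
            rw [Finset.mul_sum, ← Finset.sum_add_distrib]
            exact Finset.sum_congr rfl fun l _ => hql t l
          rw [this, sum_uu d i j hij, hp.2]; ring
      set a : ℕ → ℝ := fun t => mv (q t) with ha
      have hconc : ∀ t, 0 < t → t < m → 2 * a t ≥ a (t+1) + a (t-1) := by
        intro t ht0 htm
        have h1 : q (t+1) = q t + uu d i j := by
          funext l
          simp only [Pi.add_apply, hql]
          push_cast; ring
        have h2 : q (t-1) = q t - uu d i j := by
          funext l
          simp only [Pi.sub_apply, hql]
          have ht1 : ((t - 1 : ℕ) : ℤ) = (t : ℤ) - 1 := by omega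
          rw [ht1]; ring
        have := hAF (q t) i j hij (hqΔ t (le_of_lt htm)) (h1 ▸ hqΔ (t+1) htm)
          (h2 ▸ hqΔ (t-1) (by omega))
        simpa [ha, h1, h2] using this
      have hseg := concave_seq m a hconc k hkm
      have hqk : q k = p := by
        funext l; rw [hql, hkZ]; ring
      set A := q 0 with hA
      set B := q m with hB
      -- support cards
      have hsub : ∀ (x : Fin d → ℤ) (r : Fin d), x r = 0 →
          (∀ l, l ≠ r → x l = p l ∨ (p l ≠ 0 ∧ x l ≠ 0) ∨ x l = p l) →
          True := fun _ _ _ _ => trivial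
      have hcardA : (Finset.univ.filter (fun l => A l ≠ 0)).card ≤ n := by
        have hsubset : (Finset.univ.filter (fun l => A l ≠ 0)) ⊆
            (Finset.univ.filter (fun l => p l ≠ 0)).erase i := by
          intro l hl
          simp only [Finset.mem_filter, Finset.mem_univ, true_and] at hl
          have hAl : A l = p l + (0 - p i) * uu d i j l := by rw [hA, hql]; norm_num
          rw [Finset.mem_erase, Finset.mem_filter]
          constructor
          · intro heq
            apply hl
            rw [hAl, uu_apply d i j l hij, if_pos heq, heq]
            ring
          · refine ⟨Finset.mem_univ l, ?_⟩
            intro hpl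
            apply hl
            rw [hAl, uu_apply d i j l hij, hpl]
            split_ifs with h1 h2 <;> first | (exfalso; exact hpi (h1 ▸ hpl)) | (exfalso; exact hpj (h2 ▸ hpl)) | ring
        have hi : i ∈ Finset.univ.filter (fun l => p l ≠ 0) := by simp [hpi]
        have := Finset.card_le_card hsubset
        rw [Finset.card_erase_of_mem hi] at this
        omega
      have hcardB : (Finset.univ.filter (fun l => B l ≠ 0)).card ≤ n := by
        have hsubset : (Finset.univ.filter (fun l => B l ≠ 0)) ⊆
            (Finset.univ.filter (fun l => p l ≠ 0)).erase j := by
          intro l hl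
          simp only [Finset.mem_filter, Finset.mem_univ, true_and] at hl
          have hBl : B l = p l + p j * uu d i j l := by rw [hB, hql, hmZ]; ring
          rw [Finset.mem_erase, Finset.mem_filter]
          constructor
          · intro heq
            apply hl
            rw [hBl, uu_apply d i j l hij, heq]
            simp [Ne.symm hij]
          · refine ⟨Finset.mem_univ l, ?_⟩
            intro hpl
            apply hl
            rw [hBl, uu_apply d i j l hij, hpl]
            split_ifs with h1 h2 <;> first | (exfalso; exact hpi (h1 ▸ hpl)) | (exfalso; exact hpj (h2 ▸ hpl)) | ring
        have hj : j ∈ Finset.univ.filter (fun l => p l ≠ 0) := by simp [hpj]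
        have := Finset.card_le_card hsubset
        rw [Finset.card_erase_of_mem hj] at this
        omega
      have hAΔ : inDelta d A := hqΔ 0 (Nat.zero_le m)
      have hBΔ : inDelta d B := hqΔ m le_rfl
      have IHA := ih A hcardA hAΔ
      have IHB := ih B hcardB hBΔ
      -- combine
      have hmR : ((m : ℝ)) = (p i : ℝ) + (p j : ℝ) := by exact_mod_cast congrArg (Int.cast : ℤ → ℝ) hmZ
      have hkR : ((k : ℝ)) = (p i : ℝ) := by exact_mod_cast congrArg (Int.cast : ℤ → ℝ) hkZ
      simp only [ha] at hseg
      rw [hqk, ← hA, ← hB] at hseg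
      have hseg' : ((p i : ℝ) + p j) * mv p ≥ (p j : ℝ) * mv A + (p i : ℝ) * mv B := by
        rw [hmR, hkR] at hseg
        have : ((p i : ℝ) + p j) - p i = (p j : ℝ) := by ring
        rw [this] at hseg
        linarith
      have hpiR : (0:ℝ) ≤ (p i : ℝ) := by exact_mod_cast hp.1 i
      have hpjR : (0:ℝ) ≤ (p j : ℝ) := by exact_mod_cast hp.1 j
      have hdR : (0:ℝ) ≤ (d : ℝ) := by positivity
      have hsum : (p j : ℝ) * (∑ l, (A l : ℝ) * mv ((d : ℤ) • ev d l)) +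
          (p i : ℝ) * (∑ l, (B l : ℝ) * mv ((d : ℤ) • ev d l)) =
          ((p i : ℝ) + p j) * ∑ l, (p l : ℝ) * mv ((d : ℤ) • ev d l) := by
        rw [Finset.mul_sum, Finset.mul_sum, Finset.mul_sum, ← Finset.sum_add_distrib]
        refine Finset.sum_congr rfl fun l _ => ?_
        have hAl : A l = p l - p i * uu d i j l := by rw [hA, hql]; ring
        have hBl : B l = p l + p j * uu d i j l := by rw [hB, hql, hmZ]; ring
        rw [hAl, hBl]
        push_cast
        ring
      have hmpos : (0:ℝ) < (p i : ℝ) + p j := by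
        have : (1:ℝ) ≤ (p i : ℝ) := by exact_mod_cast hpi1
        have : (1:ℝ) ≤ (p j : ℝ) := by exact_mod_cast hpj1
        linarith
      have step1 : ((p i : ℝ) + p j) * ((d : ℝ) * mv p) ≥
          ((p i : ℝ) + p j) * ∑ l, (p l : ℝ) * mv ((d : ℤ) • ev d l) := by
        have h1 : (d : ℝ) * (((p i : ℝ) + p j) * mv p) ≥
            (d : ℝ) * ((p j : ℝ) * mv A + (p i : ℝ) * mv B) :=
          mul_le_mul_of_nonneg_left hseg' hdR
        have h2 : (p j : ℝ) * ((d:ℝ) * mv A) ≥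
            (p j : ℝ) * (∑ l, (A l : ℝ) * mv ((d : ℤ) • ev d l)) :=
          mul_le_mul_of_nonneg_left IHA hpjR
        have h3 : (p i : ℝ) * ((d:ℝ) * mv B) ≥
            (p i : ℝ) * (∑ l, (B l : ℝ) * mv ((d : ℤ) • ev d l)) :=
          mul_le_mul_of_nonneg_left IHB hpiR
        nlinarith [hsum]
      exact le_of_mul_le_mul_left step1 hmpos
    · -- at most one nonzero coordinate
      push_neg at hex
      have hone : ∃ i, p i ≠ 0 := by
        by_contra h
        push_neg at h
        have := hp.2
        simp [h] at this
        omega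
      obtain ⟨i, hi⟩ := hone
      have hall : ∀ l, l ≠ i → p l = 0 := by
        intro l hl
        by_contra h
        exact h (by
          have := hex l i hl
          tauto)
      have hpi : p i = d := by
        have := hp.2
        rw [← this, Finset.sum_eq_single i (fun l _ hl => hall l hl) (by simp)]
      have hpev : p = (d : ℤ) • ev d i := by
        funext l
        by_cases h : l = i
        · subst h; simp [ev, hpi]
        · simp [ev, h, hall l h]
      have : ∑ l, (p l : ℝ) * mv ((d : ℤ) • ev d l) = (d : ℝ) * mv ((d:ℤ) • ev d i) := by
        rw [Finset.sum_eq_single i (fun l _ hl => by simp [hall l hl]) (by simp)]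
        rw [hpi]; push_cast; ring
      rw [this, hpev]

theorem stmt_12 (d : ℕ) (hd : 2 ≤ d) (mv : (Fin d → ℤ) → ℝ)
    (hnn : ∀ p, inDelta d p → 0 ≤ mv p)
    (hAF : ∀ (p : Fin d → ℤ) (i j : Fin d), i ≠ j →
      inDelta d p → inDelta d (p + uu d i j) → inDelta d (p - uu d i j) →
      2 * mv p ≥ mv (p + uu d i j) + mv (p - uu d i j)) :
    ((d : ℝ) * mv (fun _ => 1) ≥ ∑ i : Fin d, mv ((d : ℤ) • ev d i)) ∧
      ∀ i : Fin d, mv ((d : ℤ) • ev d i) ≤ (d : ℝ) * mv (fun _ => 1) := by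
  have hd1 : 1 ≤ d := by omega
  have hone : inDelta d (fun _ => (1 : ℤ)) := by
    constructor
    · intro i; norm_num
    · simp
  have hmain := claimA d hd1 mv hAF d (fun _ => (1:ℤ))
    (by
      calc (Finset.univ.filter (fun i => (1:ℤ) ≠ 0)).card ≤ (Finset.univ : Finset (Fin d)).card :=
            Finset.card_le_card (Finset.filter_subset _ _)
        _ = d := by simp)
    hone
  simp only [Int.cast_one, one_mul] at hmain
  have hvΔ : ∀ i : Fin d, inDelta d ((d : ℤ) • ev d i) := by
    intro i
    constructor
    · intro l
      simp only [Pi.smul_apply, smul_eq_mul, ev]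
      split_ifs <;> omega
    · have : ∑ l, ((d:ℤ) • ev d i) l = ∑ l, (if l = i then (d:ℤ) else 0) := by
        refine Finset.sum_congr rfl fun l _ => ?_
        simp only [Pi.smul_apply, smul_eq_mul, ev]
        split_ifs <;> ring
      rw [this, Finset.sum_ite_eq' Finset.univ i (fun _ => (d:ℤ))]
      simp
  refine ⟨hmain, fun i => ?_⟩
  have : mv ((d:ℤ) • ev d i) ≤ ∑ l : Fin d, mv ((d:ℤ) • ev d l) :=
    Finset.single_le_sum (f := fun l => mv ((d:ℤ) • ev d l))
      (fun l _ => hnn _ (hvΔ l)) (Finset.mem_univ i)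
  linarith
end

section
/- Let V be defined on quadruples of convex bodies and suppose V satisfies the square inequalities: V(A,A,D)·V(B,C,D) ≤ 2·V(A,B,D)·V(A,C,D) for all convex bodies A,B,C and tuples D. Then, in the abstract setting on Δ_{d,d}: for disjoint I, J ⊂ [d] with |I| = |J| = 2, and any point p ∈ Δ_{d,d} with p ± u_{I,J} ∈ Δ_{d,d}, one has V(p + u_{I,J})·V(p - u_{I,J}) ≤ 16·V(p)^2, where u_{I,J} = Σ_{i∈I} e_i - Σ_{j∈J} e_j. -/
/-- The direction `u_{I,J} = Σ_{i∈I} e_i - Σ_{j∈J} e_j`. -/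
def uIJ (d : ℕ) (I J : Finset (Fin d)) : Fin d → ℤ :=
  ∑ i ∈ I, ev d i - ∑ j ∈ J, ev d j

lemma sum_ev (d : ℕ) (x : Fin d) : ∑ k, ev d x k = 1 := by
  simp [ev]

lemma inDelta_move {d : ℕ} {p : Fin d → ℤ} {x z : Fin d} (hxz : x ≠ z)
    (hp : inDelta d p) (hz : 1 ≤ p z) : inDelta d (p + uu d x z) := by
  constructor
  · intro i
    have h0 := hp.1 i
    simp only [Pi.add_apply, uu, Pi.sub_apply, ev]
    by_cases hiz : i = z
    · subst hiz
      rw [if_neg (fun h => hxz h.symm), if_pos rfl]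
      omega
    · rw [if_neg hiz]
      split_ifs <;> omega
  · have hs := hp.2
    simp only [Pi.add_apply, uu, Pi.sub_apply]
    rw [Finset.sum_add_distrib, Finset.sum_sub_distrib, sum_ev, sum_ev]
    omega

theorem stmt_14 (d : ℕ) (hd : 4 ≤ d) (V : (Fin d → ℤ) → ℝ)
    (hpos : ∀ p, inDelta d p → 0 < V p)
    (hsq : ∀ (q : Fin d → ℤ) (a b c : Fin d), a ≠ b → a ≠ c → b ≠ c →
      inDelta d q → inDelta d (q + uu d a c) → inDelta d (q + uu d b c) →
      inDelta d (q + uu d a c + uu d b c) →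
      V q * V (q + uu d a c + uu d b c) ≤ 2 * V (q + uu d a c) * V (q + uu d b c))
    (I J : Finset (Fin d)) (hIJ : Disjoint I J) (hI : I.card = 2) (hJ : J.card = 2)
    (p : Fin d → ℤ) (hp : inDelta d p)
    (hp1 : inDelta d (p + uIJ d I J)) (hp2 : inDelta d (p - uIJ d I J)) :
    V (p + uIJ d I J) * V (p - uIJ d I J) ≤ 16 * V p ^ 2 := by
  obtain ⟨a, b, hab, rfl⟩ := Finset.card_eq_two.mp hI
  obtain ⟨c, f, hcf, rfl⟩ := Finset.card_eq_two.mp hJ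
  have hac : a ≠ c := fun h => Finset.disjoint_left.mp hIJ
    (show a ∈ ({a, b} : Finset (Fin d)) by simp)
    (show a ∈ ({c, f} : Finset (Fin d)) by simp [h])
  have haf : a ≠ f := fun h => Finset.disjoint_left.mp hIJ
    (show a ∈ ({a, b} : Finset (Fin d)) by simp)
    (show a ∈ ({c, f} : Finset (Fin d)) by simp [h])
  have hbc : b ≠ c := fun h => Finset.disjoint_left.mp hIJ
    (show b ∈ ({a, b} : Finset (Fin d)) by simp)
    (show b ∈ ({c, f} : Finset (Fin d)) by simp [h])
  have hbf : b ≠ f := fun h => Finset.disjoint_left.mp hIJ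
    (show b ∈ ({a, b} : Finset (Fin d)) by simp)
    (show b ∈ ({c, f} : Finset (Fin d)) by simp [h])
  have huIJ : uIJ d {a, b} {c, f} = ev d a + ev d b - (ev d c + ev d f) := by
    simp [uIJ, Finset.sum_pair hab, Finset.sum_pair hcf]
  rw [huIJ] at hp1 hp2 ⊢
  set U : Fin d → ℤ := ev d a + ev d b - (ev d c + ev d f) with hU
  -- coordinate lower bounds
  have ha1 : 1 ≤ p a := by
    have := hp2.1 a
    simp [hU, ev, hab, hac, haf] at this
    omega
  have hb1 : 1 ≤ p b := by
    have := hp2.1 b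
    simp [hU, ev, hab.symm, hbc, hbf] at this
    omega
  have hc1 : 1 ≤ p c := by
    have := hp1.1 c
    simp [hU, ev, hac.symm, hbc.symm, hcf] at this
    omega
  have hf1 : 1 ≤ p f := by
    have := hp1.1 f
    simp [hU, ev, haf.symm, hbf.symm, hcf.symm] at this
    omega
  -- auxiliary points
  have hA1 : inDelta d (p + uu d f a) := inDelta_move haf.symm hp ha1
  have hA2 : inDelta d (p + uu d f b) := inDelta_move hbf.symm hp hb1
  have hA3 : inDelta d (p + uu d b a) := inDelta_move hab.symm hp ha1
  have hA4 : inDelta d (p + uu d b f) := inDelta_move hbf hp hf1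
  have hA5 : inDelta d (p + uu d b c) := inDelta_move hbc hp hc1
  have hA6 : inDelta d (p + uu d f c) := inDelta_move hcf.symm hp hc1
  -- point identities for application 1 (base p - U, indices a b c)
  have E11 : p - U + uu d a c = p + uu d f b := by rw [hU]; simp only [uu]; abel
  have E12 : p - U + uu d b c = p + uu d f a := by rw [hU]; simp only [uu]; abel
  have E13 : p - U + uu d a c + uu d b c = p + uu d f c := by
    rw [hU]; simp only [uu]; abel
  have i1 := hsq (p - U) a b c hab hac hbc hp2 (by rw [E11]; exact hA2) (by rw [E12]; exact hA1) (by rw [E13]; exact hA6)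
  rw [E13, E11, E12] at i1
  -- application 2 (base p + uu f a, indices a b f)
  have E21 : p + uu d f a + uu d a f = p := by simp only [uu]; abel
  have E22 : p + uu d f a + uu d b f = p + uu d b a := by simp only [uu]; abel
  have E23 : p + uu d f a + uu d a f + uu d b f = p + uu d b f := by
    simp only [uu]; abel
  have i2 := hsq (p + uu d f a) a b f hab haf hbf hA1 (by rw [E21]; exact hp) (by rw [E22]; exact hA3)
    (by rw [E23]; exact hA4)
  rw [E23, E21, E22] at i2
  -- application 3 (base p + uu b c, indices c f b)
  have E31 : p + uu d b c + uu d c b = p := by simp only [uu]; abel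
  have E32 : p + uu d b c + uu d f b = p + uu d f c := by simp only [uu]; abel
  have E33 : p + uu d b c + uu d c b + uu d f b = p + uu d f b := by
    simp only [uu]; abel
  have i3 := hsq (p + uu d b c) c f b hcf hbc.symm hbf.symm hA5 (by rw [E31]; exact hp)
    (by rw [E32]; exact hA6) (by rw [E33]; exact hA2)
  rw [E33, E31, E32] at i3
  -- application 4 (base p + U, indices c f a)
  have E41 : p + U + uu d c a = p + uu d b f := by rw [hU]; simp only [uu]; abel
  have E42 : p + U + uu d f a = p + uu d b c := by rw [hU]; simp only [uu]; abel
  have E43 : p + U + uu d c a + uu d f a = p + uu d b a := by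
    rw [hU]; simp only [uu]; abel
  have i4 := hsq (p + U) c f a hcf hac.symm haf.symm hp1 (by rw [E41]; exact hA4) (by rw [E42]; exact hA5)
    (by rw [E43]; exact hA3)
  rw [E43, E41, E42] at i4
  -- positivity
  have P0 := hpos p hp
  have Pu := hpos _ hp1
  have Pm := hpos _ hp2
  have P1 := hpos _ hA1
  have P2 := hpos _ hA2
  have P3 := hpos _ hA3
  have P4 := hpos _ hA4
  have P5 := hpos _ hA5
  have P6 := hpos _ hA6
  set Vp := V p
  set Vu := V (p + U)
  set Vm := V (p - U)
  set v1 := V (p + uu d f a)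
  set v2 := V (p + uu d f b)
  set v3 := V (p + uu d b a)
  set v4 := V (p + uu d b f)
  set v5 := V (p + uu d b c)
  set v6 := V (p + uu d f c)
  -- i1 : Vm * v6 ≤ 2 * v2 * v1
  -- i2 : v1 * v4 ≤ 2 * Vp * v3
  -- i3 : v5 * v2 ≤ 2 * Vp * v6
  -- i4 : Vu * v3 ≤ 2 * v4 * v5
  have m12 := mul_le_mul i1 i2 (by positivity) (by positivity)
  have m34 := mul_le_mul i3 i4 (by positivity) (by positivity)
  have m := mul_le_mul m12 m34 (by positivity) (by positivity)
  have hS : (0:ℝ) < v1 * v2 * v3 * v4 * v5 * v6 := by positivity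
  have key : (Vu * Vm) * (v1 * v2 * v3 * v4 * v5 * v6) ≤
      (16 * Vp ^ 2) * (v1 * v2 * v3 * v4 * v5 * v6) := by
    calc (Vu * Vm) * (v1 * v2 * v3 * v4 * v5 * v6)
        = Vm * v6 * (v1 * v4) * (v5 * v2 * (Vu * v3)) := by ring
      _ ≤ 2 * v2 * v1 * (2 * Vp * v3) * (2 * Vp * v6 * (2 * v4 * v5)) := m
      _ = (16 * Vp ^ 2) * (v1 * v2 * v3 * v4 * v5 * v6) := by ring
  exact le_of_mul_le_mul_right key hS
end

section
/- For every decreasing vector p = (p_1 ≥ p_2 ≥ ... ≥ p_d) of non-negative integers with p_1 + ... + p_d = d, there exists a sequence of decreasing vectors a_1, ..., a_{p_1} in Δ_{d,d} with a_1 = (1,1,...,1), a_{p_1} = p, max(a_i) = i for all i, and such that each difference a_{i+1} - a_i is of the form Σ_{k=1}^{n} e_k - Σ_{k=l+1}^{l+n} e_k for some l ≥ n ≥ 1 with l + n ≤ d and with the first n entries of a_i all equal to its maximum entry i. -/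
private lemma stmt15_lt_card_iff {d : ℕ} (p : Fin d → ℕ)
    (hdec : ∀ i j : Fin d, i ≤ j → p j ≤ p i) (j : ℕ) (k : Fin d) :
    (k : ℕ) < (Finset.univ.filter (fun m : Fin d => j ≤ p m)).card ↔ j ≤ p k := by
  constructor
  · intro h
    by_contra hc
    push_neg at hc
    have hsub : (Finset.univ.filter (fun m : Fin d => j ≤ p m)) ⊆ Finset.Iio k := by
      intro m hm
      simp only [Finset.mem_filter, Finset.mem_univ, true_and] at hm
      simp only [Finset.mem_Iio]
      by_contra hmk
      push_neg at hmk
      exact absurd (le_trans hm (hdec k m hmk)) (by omega)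
    have hc2 := Finset.card_le_card hsub
    rw [Fin.card_Iio] at hc2
    omega
  · intro h
    have hsub : Finset.Iic k ⊆ (Finset.univ.filter (fun m : Fin d => j ≤ p m)) := by
      intro m hm
      simp only [Finset.mem_Iic] at hm
      simp only [Finset.mem_filter, Finset.mem_univ, true_and]
      exact le_trans h (hdec m k hm)
    have hc2 := Finset.card_le_card hsub
    rw [Fin.card_Iic] at hc2
    omega

theorem stmt_15 (d : ℕ) (hd : 1 ≤ d) (p : Fin d → ℕ)
    (hdec : ∀ i j : Fin d, i ≤ j → p j ≤ p i)
    (hsum : ∑ i, p i = d) :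
    ∃ a : ℕ → Fin d → ℕ,
      a 1 = (fun _ => 1) ∧
      a (p ⟨0, hd⟩) = p ∧
      -- each a i is a decreasing vector in Δ_{d,d} with maximum entry i
      (∀ i, 1 ≤ i → i ≤ p ⟨0, hd⟩ →
        (∀ k l : Fin d, k ≤ l → a i l ≤ a i k) ∧
        (∑ k, a i k = d) ∧
        a i ⟨0, hd⟩ = i) ∧
      -- each step is an admissible vector Σ_{k=1}^{n} e_k - Σ_{k=l+1}^{l+n} e_k
      (∀ i, 1 ≤ i → i < p ⟨0, hd⟩ →
        ∃ n l : ℕ, 1 ≤ n ∧ n ≤ l ∧ l + n ≤ d ∧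
          (∀ k : Fin d, (k : ℕ) < n → a i k = i) ∧
          (∀ k : Fin d, (a (i + 1) k : ℤ) =
            (a i k : ℤ) + (if (k : ℕ) < n then 1 else 0) -
              (if l ≤ (k : ℕ) ∧ (k : ℕ) < l + n then 1 else 0))) := by
  set Q : ℕ → ℕ := fun j => (Finset.univ.filter (fun m : Fin d => j ≤ p m)).card with hQ
  set R : ℕ → ℕ := fun i => ∑ k, (p k - i) with hR
  set N : ℕ → ℕ := fun i => Q 1 + R i with hN
  set a : ℕ → Fin d → ℕ := fun i k => if (k : ℕ) < N i then max (min (p k) i) 1 else 0 with ha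
  have hF1 : ∀ (j : ℕ) (k : Fin d), (k : ℕ) < Q j ↔ j ≤ p k :=
    fun j k => stmt15_lt_card_iff p hdec j k
  have hp0 : ∀ k : Fin d, p k ≤ p ⟨0, hd⟩ := fun k => hdec ⟨0, hd⟩ k (Fin.mk_le_mk.mpr (Nat.zero_le _))
  have hp0pos : 1 ≤ p ⟨0, hd⟩ := by
    by_contra hc
    push_neg at hc
    have : ∀ k : Fin d, p k = 0 := fun k => by have := hp0 k; omega
    rw [Finset.sum_congr rfl (fun k _ => this k)] at hsum
    simp at hsum
    omega
  -- Q 1 expressed as a sum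
  have hQ1 : Q 1 = ∑ k : Fin d, min (p k) 1 := by
    simp only [hQ, Finset.card_filter]
    exact Finset.sum_congr rfl (fun k _ => by by_cases h : 1 ≤ p k <;> simp [h] <;> omega)
  -- N 1 = d
  have hN1 : N 1 = d := by
    simp only [hN, hR, hQ1]
    rw [← Finset.sum_add_distrib,
      Finset.sum_congr rfl (fun k _ => (by omega : p k ⊓ 1 + (p k - 1) = p k))]
    exact hsum
  -- R antitone
  have hRanti : ∀ i j : ℕ, i ≤ j → R j ≤ R i := by
    intro i j hij
    simp only [hR]
    exact Finset.sum_le_sum (fun k _ => Nat.sub_le_sub_left hij _)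
  have hNle : ∀ i : ℕ, 1 ≤ i → N i ≤ d := by
    intro i hi
    rw [← hN1]
    simp only [hN]
    exact Nat.add_le_add_left (hRanti 1 i hi) _
  have hQ1N : ∀ i : ℕ, Q 1 ≤ N i := fun i => Nat.le_add_right _ _
  -- key recurrence: N i = N (i+1) + Q (i+1)
  have hQsum : ∀ j : ℕ, Q j = ∑ k : Fin d, (if j ≤ p k then 1 else 0) := by
    intro j
    simp only [hQ, Finset.card_filter]
  have hNrec : ∀ i : ℕ, N i = N (i + 1) + Q (i + 1) := by
    intro i
    simp only [hN, hR, hQsum]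
    have : (∑ k : Fin d, (p k - i)) = ∑ k : Fin d, ((p k - (i+1)) + if (i+1) ≤ p k then 1 else 0) := by
      refine Finset.sum_congr rfl (fun k _ => ?_)
      by_cases h : i + 1 ≤ p k <;> simp [h] <;> omega
    rw [this, Finset.sum_add_distrib]
    omega
  have hNanti : ∀ i : ℕ, N (i + 1) ≤ N i := fun i => by rw [hNrec i]; omega
  -- p k = 0 outside Q 1
  have hpz : ∀ k : Fin d, Q 1 ≤ (k : ℕ) → p k = 0 := by
    intro k hk
    have := (hF1 1 k)
    omega
  -- sum of a i is d for 1 ≤ i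
  have hsuma : ∀ i : ℕ, 1 ≤ i → ∑ k, a i k = d := by
    intro i hi
    have hkey : ∀ k : Fin d, a i k = min (p k) i + (if Q 1 ≤ (k : ℕ) ∧ (k : ℕ) < N i then 1 else 0) := by
      intro k
      simp only [ha]
      by_cases h1 : (k : ℕ) < Q 1
      · have hp : 1 ≤ p k := (hF1 1 k).mp h1
        have hk : (k : ℕ) < N i := lt_of_lt_of_le h1 (hQ1N i)
        simp only [if_pos hk, if_neg (by omega : ¬(Q 1 ≤ (k : ℕ) ∧ (k : ℕ) < N i))]
        omega
      · have hp : p k = 0 := hpz k (by omega)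
        by_cases h2 : (k : ℕ) < N i
        · simp only [if_pos h2, if_pos (⟨by omega, h2⟩ : Q 1 ≤ (k : ℕ) ∧ (k : ℕ) < N i)]
          omega
        · simp only [if_neg h2, if_neg (by omega : ¬(Q 1 ≤ (k : ℕ) ∧ (k : ℕ) < N i))]
          omega
    rw [Finset.sum_congr rfl (fun k _ => hkey k), Finset.sum_add_distrib]
    have hind : (∑ k : Fin d, (if Q 1 ≤ (k : ℕ) ∧ (k : ℕ) < N i then 1 else 0)) = R i := by
      rw [Fin.sum_univ_eq_sum_range (fun k => if Q 1 ≤ k ∧ k < N i then 1 else 0) d]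
      rw [← Finset.card_filter]
      have hfil : (Finset.range d).filter (fun k => Q 1 ≤ k ∧ k < N i) = Finset.Ico (Q 1) (N i) := by
        ext k
        simp only [Finset.mem_filter, Finset.mem_range, Finset.mem_Ico]
        have := hNle i hi
        omega
      rw [hfil, Nat.card_Ico]
      simp only [hN]
      omega
    rw [hind]
    have : (∑ k : Fin d, min (p k) i) + R i = ∑ k : Fin d, p k := by
      simp only [hR]
      rw [← Finset.sum_add_distrib]
      exact Finset.sum_congr rfl (fun k _ => by omega)
    omega
  refine ⟨a, ?_, ?_, ?_, ?_⟩
  · -- a 1 = all ones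
    funext k
    simp only [ha]
    simp only [if_pos (by rw [hN1]; exact k.isLt : (k : ℕ) < N 1)]
    omega
  · -- a (p 0) = p
    funext k
    simp only [ha]
    have hRp0 : R (p ⟨0, hd⟩) = 0 := by
      simp only [hR]
      refine Finset.sum_eq_zero (fun k _ => ?_)
      have := hp0 k
      omega
    have hNp0 : N (p ⟨0, hd⟩) = Q 1 := by simp only [hN]; omega
    by_cases h1 : (k : ℕ) < Q 1
    · have hp1 : 1 ≤ p k := (hF1 1 k).mp h1
      rw [hNp0, if_pos h1]
      have := hp0 k
      omega
    · rw [hNp0, if_neg h1]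
      have := hpz k (by omega)
      omega
  · -- structure of each a i
    intro i hi hip
    refine ⟨?_, hsuma i hi, ?_⟩
    · intro k l hkl
      simp only [ha]
      have hpkl : p l ≤ p k := hdec k l hkl
      have hkl' : (k : ℕ) ≤ (l : ℕ) := hkl
      by_cases h2 : (l : ℕ) < N i
      · rw [if_pos h2, if_pos (by omega)]
        omega
      · rw [if_neg h2]
        omega
    · simp only [ha]
      have hQ1pos : (0 : ℕ) < Q 1 := (hF1 1 ⟨0, hd⟩).mpr hp0pos
      have h0 : ((⟨0, hd⟩ : Fin d) : ℕ) < N i := lt_of_lt_of_le hQ1pos (hQ1N i)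
      rw [if_pos h0]
      have := hp0pos
      omega
  · -- the steps
    intro i hi hip
    refine ⟨Q (i + 1), N (i + 1), ?_, ?_, ?_, ?_, ?_⟩
    · -- 1 ≤ n
      have := (hF1 (i + 1) ⟨0, hd⟩).mpr (by omega)
      omega
    · -- n ≤ l
      have hQmono : Q (i + 1) ≤ Q 1 := by
        simp only [hQ]
        exact Finset.card_le_card (fun m hm => by
          simp only [Finset.mem_filter, Finset.mem_univ, true_and] at *
          omega)
      have := hQ1N (i + 1)
      omega
    · -- l + n ≤ d
      rw [← hNrec i]
      exact hNle i hi
    · -- first n entries of a i equal i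
      intro k hk
      have hpk : i + 1 ≤ p k := (hF1 (i + 1) k).mp hk
      have hkN : (k : ℕ) < N i := by
        have h1 : Q (i + 1) ≤ N i := by rw [hNrec i]; omega
        omega
      simp only [ha]
      simp only [if_pos hkN]
      omega
    · -- the difference identity
      intro k
      have hNi : N i = N (i + 1) + Q (i + 1) := hNrec i
      simp only [ha]
      by_cases h1 : (k : ℕ) < Q (i + 1)
      · have hpk : i + 1 ≤ p k := (hF1 (i + 1) k).mp h1
        have hQleN : Q (i + 1) ≤ N (i + 1) := by
          have hQmono : Q (i + 1) ≤ Q 1 := by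
            simp only [hQ]
            exact Finset.card_le_card (fun m hm => by
              simp only [Finset.mem_filter, Finset.mem_univ, true_and] at *
              omega)
          have := hQ1N (i + 1)
          omega
        have hk1 : (k : ℕ) < N (i + 1) := by omega
        have hk0 : (k : ℕ) < N i := by omega
        rw [if_pos hk1, if_pos hk0, if_pos h1, if_neg (by omega : ¬(N (i+1) ≤ (k:ℕ) ∧ (k:ℕ) < N (i+1) + Q (i+1)))]
        have e1 : max (min (p k) (i + 1)) 1 = i + 1 := by omega
        have e2 : max (min (p k) i) 1 = i := by omega
        rw [e1, e2]
        push_cast <;> omega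
      · have hpk : p k ≤ i := by have := (hF1 (i + 1) k); omega
        by_cases h2 : (k : ℕ) < N (i + 1)
        · have hk0 : (k : ℕ) < N i := by omega
          rw [if_pos h2, if_pos hk0, if_neg h1, if_neg (by omega : ¬(N (i+1) ≤ (k:ℕ) ∧ (k:ℕ) < N (i+1) + Q (i+1)))]
          have e1 : min (p k) (i + 1) = min (p k) i := by omega
          rw [e1]
          push_cast <;> omega
        · by_cases h3 : (k : ℕ) < N i
          · have hpz' : p k = 0 := hpz k (by have := hQ1N (i + 1); omega)
            rw [if_neg h2, if_pos h3, if_neg h1, if_pos (⟨by omega, by omega⟩ : N (i+1) ≤ (k:ℕ) ∧ (k:ℕ) < N (i+1) + Q (i+1))]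
            have e2 : max (min (p k) i) 1 = 1 := by omega
            rw [e2]
            push_cast <;> omega
          · rw [if_neg h2, if_neg h3, if_neg h1, if_neg (by omega : ¬(N (i+1) ≤ (k:ℕ) ∧ (k:ℕ) < N (i+1) + Q (i+1)))]
            push_cast <;> omega
end
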